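/- A c-edge-colored graph G with at least one vertex has no PC closed walk if and only if G has a G-monochromatic vertex z such that G − z has no PC closed walk. -/

import Mathlib

open SimpleGraph

variable {V : Type*} {c : ℕ}

/-- The list of colors of the edges of a walk, in order. -/
def colorList (G : SimpleGraph V) (col : V → V → Fin c) {u v : V} (w : G.Walk u v) :
    List (Fin c) :=
  w.darts.map fun d => col d.toProd.1 d.toProd.2

/-- A walk is properly colored (as an open walk): consecutive edges have different colors. -/
def IsPCOpen (G : SimpleGraph V) (col : V → V → Fin c) {u v : V} (w : G.Walk u v) : Prop :=
  (colorList G col w).Chain' (· ≠ ·)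

/-- A closed walk is properly colored: consecutive edges have different colors,
including the last versus the first edge. -/
def IsPCClosed (G : SimpleGraph V) (col : V → V → Fin c) {u : V} (w : G.Walk u u) : Prop :=
  (colorList G col w ++ (colorList G col w).take 1).Chain' (· ≠ ·)

/-- `G` (with coloring `col`) has a properly colored cycle. -/
def HasPCCycle (G : SimpleGraph V) (col : V → V → Fin c) : Prop :=
  ∃ (u : V) (w : G.Walk u u), w.IsCycle ∧ IsPCClosed G col w

/-- `G` (with coloring `col`) has a properly colored closed trail. -/
def HasPCClosedTrail (G : SimpleGraph V) (col : V → V → Fin c) : Prop :=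
  ∃ (u : V) (w : G.Walk u u), w.IsCircuit ∧ IsPCClosed G col w

/-- `G` (with coloring `col`) has a properly colored closed walk. -/
def HasPCClosedWalk (G : SimpleGraph V) (col : V → V → Fin c) : Prop :=
  ∃ (u : V) (w : G.Walk u u), 0 < w.length ∧ IsPCClosed G col w

/-- A vertex all of whose incident edges have the same color. -/
def MonoVertex (G : SimpleGraph V) (col : V → V → Fin c) (z : V) : Prop :=
  ∀ v w, G.Adj z v → G.Adj z w → col z v = col z w

/-- An ordering (given by an injective ranking `r`) is of type 1 if every vertex sends
edges of only one color into each connected component of the subgraph induced by the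
later vertices. -/
def Ordering1 (G : SimpleGraph V) (col : V → V → Fin c) (r : V → ℕ) : Prop :=
  ∀ (u v w : V) (hv : G.Adj u v) (hw : G.Adj u w) (hrv : r u < r v) (hrw : r u < r w),
    (G.induce {x | r u < r x}).Reachable ⟨v, hrv⟩ ⟨w, hrw⟩ → col u v = col u w

/-- Type 2: all edges from a vertex to later vertices which are not bridges in the
subgraph induced by the vertex together with the later vertices have the same color. -/
def Ordering2 (G : SimpleGraph V) (col : V → V → Fin c) (r : V → ℕ) : Prop :=
  ∀ (u v w : V) (hv : G.Adj u v) (hw : G.Adj u w) (hrv : r u < r v) (hrw : r u < r w),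
    ¬ (G.induce {x | r u ≤ r x}).IsBridge s(⟨u, le_refl (r u)⟩, ⟨v, hrv.le⟩) →
    ¬ (G.induce {x | r u ≤ r x}).IsBridge s(⟨u, le_refl (r u)⟩, ⟨w, hrw.le⟩) →
    col u v = col u w

/-- Type 3: all edges from a vertex to later vertices have the same color. -/
def Ordering3 (G : SimpleGraph V) (col : V → V → Fin c) (r : V → ℕ) : Prop :=
  ∀ u v w : V, G.Adj u v → G.Adj u w → r u < r v → r u < r w → col u v = col u w

/-- Type 4: all edges to later vertices have the same color and all edges to earlier
vertices have the same color. -/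
def Ordering4 (G : SimpleGraph V) (col : V → V → Fin c) (r : V → ℕ) : Prop :=
  Ordering3 G col r ∧
    ∀ u v w : V, G.Adj u v → G.Adj u w → r v < r u → r w < r u → col u v = col u w

/-- Type 5: type 4, and additionally the color towards earlier vertices differs from the
color towards later vertices. -/
def Ordering5 (G : SimpleGraph V) (col : V → V → Fin c) (r : V → ℕ) : Prop :=
  Ordering4 G col r ∧
    ∀ u v w : V, G.Adj u v → G.Adj u w → r v < r u → r u < r w → col u v ≠ col u w

def PCAcyclic1 (G : SimpleGraph V) (col : V → V → Fin c) : Prop :=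
  ∃ r : V → ℕ, Function.Injective r ∧ Ordering1 G col r

def PCAcyclic2 (G : SimpleGraph V) (col : V → V → Fin c) : Prop :=
  ∃ r : V → ℕ, Function.Injective r ∧ Ordering2 G col r

def PCAcyclic3 (G : SimpleGraph V) (col : V → V → Fin c) : Prop :=
  ∃ r : V → ℕ, Function.Injective r ∧ Ordering3 G col r

def PCAcyclic4 (G : SimpleGraph V) (col : V → V → Fin c) : Prop :=
  ∃ r : V → ℕ, Function.Injective r ∧ Ordering4 G col r

def PCAcyclic5 (G : SimpleGraph V) (col : V → V → Fin c) : Prop :=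
  ∃ r : V → ℕ, Function.Injective r ∧ Ordering5 G col r

/-- The number of `C`-monochromatic vertices of a closed walk `C`: vertices whose two
incident edges on `C` (cyclically) have the same color. -/
def monoCount (G : SimpleGraph V) (col : V → V → Fin c) {u : V} (w : G.Walk u u) : ℕ :=
  ((colorList G col w ++ (colorList G col w).take 1).zip
      (colorList G col w ++ (colorList G col w).take 1).tail).countP
    fun p => decide (p.1 = p.2)

/-- The number of vertices of a closed walk `C` that are not `C`-monochromatic. -/
def nonMonoCount (G : SimpleGraph V) (col : V → V → Fin c) {u : V} (w : G.Walk u u) : ℕ :=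
  ((colorList G col w ++ (colorList G col w).take 1).zip
      (colorList G col w ++ (colorList G col w).take 1).tail).countP
    fun p => decide (p.1 ≠ p.2)


/-!
A PC closed walk cannot pass through a monochromatic vertex `z`: rotated to start at `z`, it
leaves and re-enters `z` along edges that would have to differ in color. So peeling off such a `z`
loses no PC closed walk. Conversely, if no vertex is monochromatic, every dart `(u, v)` can be
followed by a dart `(v, w)` of another color; iterating this choice on the finitely many darts
reaches a periodic dart, and its period traces a PC closed walk.
-/

lemma List.isChain_iterate {α : Type*} {R : α → α → Prop} {f : α → α}
    (hf : ∀ x, R x (f x)) (a : α) (n : ℕ) : (List.iterate f a n).IsChain R := by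
  refine List.isChain_iff_getElem.2 fun i hi => ?_
  simp only [List.getElem_iterate, Function.iterate_succ_apply']
  exact hf _

lemma Cycle.chain_iterate_of_isPeriodicPt {α : Type*} {R : α → α → Prop} {f : α → α}
    (hf : ∀ x, R x (f x)) {a : α} {n : ℕ} (ha : Function.IsPeriodicPt f n a) :
    Cycle.Chain R (List.iterate f a n : Cycle α) := by
  cases n with
  | zero => exact Cycle.Chain.nil R
  | succ n =>
    have hclose : a :: (List.iterate f (f a) n ++ [a]) = List.iterate f a (n + 2) := by
      rw [List.iterate_add f a (n + 1) 1, ha.eq]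
      rfl
    rw [List.iterate, Cycle.chain_coe_cons, hclose]
    exact List.isChain_iterate hf a _

lemma Function.exists_isPeriodicPt_of_finite {α : Type*} [Finite α] [Nonempty α]
    (f : α → α) : ∃ x n, 0 < n ∧ Function.IsPeriodicPt f n x := by
  obtain ⟨x⟩ := ‹Nonempty α›
  obtain ⟨m, n, hne, heq⟩ := Finite.exists_ne_map_eq_of_infinite (f^[·] x)
  wlog hmn : m < n generalizing m n
  · exact this n m hne.symm heq.symm (by omega)
  refine ⟨f^[m] x, n - m, by omega, ?_⟩
  rw [Function.IsPeriodicPt, Function.IsFixedPt, ← Function.iterate_add_apply,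
    Nat.sub_add_cancel hmn.le]
  exact heq.symm

lemma Cycle.Chain.rel_getLast_head {α : Type*} {R : α → α → Prop} {l : List α}
    (h : Cycle.Chain R (l : Cycle α)) (hl : l ≠ []) : R (l.getLast hl) (l.head hl) := by
  rw [Cycle.chain_ne_nil R hl] at h
  obtain ⟨a, t, rfl⟩ := List.exists_cons_of_ne_nil hl
  exact (List.isChain_cons_cons.1 h).1

lemma List.isChain_append_take_one_iff {α : Type*} {R : α → α → Prop} (l : List α) :
    (l ++ l.take 1).IsChain R ↔ Cycle.Chain R (l : Cycle α) := by
  cases l <;> simp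

namespace SimpleGraph.Walk

variable {G : SimpleGraph V}

def ofIterate (f : G.Dart → G.Dart) (hf : ∀ d, (f d).fst = d.snd) :
    (d : G.Dart) → (n : ℕ) → G.Walk d.fst (f^[n] d).fst
  | _, 0 => nil
  | d, n + 1 =>
    cons d.adj ((ofIterate f hf (f d) n).copy (hf d)
      (congrArg (·.fst) (Function.iterate_succ_apply f n d).symm))

lemma darts_ofIterate (f : G.Dart → G.Dart) (hf : ∀ d, (f d).fst = d.snd) (d : G.Dart)
    (n : ℕ) : (ofIterate f hf d n).darts = List.iterate f d n := by
  induction n generalizing d with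
  | zero => rfl
  | succ n ih =>
    rw [ofIterate, darts_cons, darts_copy, ih]
    rfl

end SimpleGraph.Walk

section PCWalks

variable {G : SimpleGraph V} {col : V → V → Fin c}

lemma isPCClosed_iff_chain_darts {u : V} (w : G.Walk u u) :
    IsPCClosed G col w ↔
      Cycle.Chain (fun d d' : G.Dart => col d.fst d.snd ≠ col d'.fst d'.snd)
        (w.darts : Cycle G.Dart) := by
  change (colorList G col w ++ _).IsChain _ ↔ _
  rw [List.isChain_append_take_one_iff, colorList, ← Cycle.map_coe, Cycle.chain_map]

lemma isPCClosed_rotate [DecidableEq V] {u v : V} (w : G.Walk u u) (h : v ∈ w.support) :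
    IsPCClosed G col (w.rotate v h) ↔ IsPCClosed G col w := by
  rw [isPCClosed_iff_chain_darts, isPCClosed_iff_chain_darts,
    Cycle.coe_eq_coe.2 (w.rotate_darts v h)]

lemma colorList_map {W : Type*} {G' : SimpleGraph W} (f : G' →g G) {u v : W} (w : G'.Walk u v) :
    colorList G col (w.map f) = colorList G' (fun a b => col (f a) (f b)) w := by
  simp only [colorList, Walk.darts_map, List.map_map]
  rfl

lemma isPCClosed_map {W : Type*} {G' : SimpleGraph W} (f : G' →g G) {u : W} (w : G'.Walk u u) :
    IsPCClosed G col (w.map f) ↔ IsPCClosed G' (fun a b => col (f a) (f b)) w := by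
  rw [IsPCClosed, IsPCClosed, colorList_map]

lemma HasPCClosedWalk.of_hom {W : Type*} {G' : SimpleGraph W} (f : G' →g G)
    (h : HasPCClosedWalk G' (fun a b => col (f a) (f b))) : HasPCClosedWalk G col := by
  obtain ⟨u, w, hw, hpc⟩ := h
  exact ⟨f u, w.map f, by rwa [Walk.length_map], (isPCClosed_map f w).2 hpc⟩

lemma IsPCClosed.hasPCClosedWalk_induce {s : Set V} {u : V} {w : G.Walk u u}
    (hpc : IsPCClosed G col w) (hw : 0 < w.length) (hs : ∀ x ∈ w.support, x ∈ s) :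
    HasPCClosedWalk (G.induce s) (fun a b => col a.1 b.1) := by
  refine ⟨_, w.induce s hs, ?_, ?_⟩
  · rwa [← Walk.length_map (Embedding.induce s).toHom, Walk.map_induce]
  · exact (isPCClosed_map (Embedding.induce s).toHom _).1 (by rwa [Walk.map_induce])

lemma IsPCClosed.not_monoVertex (hsym : ∀ u v, col u v = col v u) {u z : V} {w : G.Walk u u}
    (hpc : IsPCClosed G col w) (hw : 0 < w.length) (hz : z ∈ w.support) :
    ¬ MonoVertex G col z := by
  classical
  intro hmono
  set w' := w.rotate z hz
  have hne : w'.darts ≠ [] := by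
    rw [← List.length_pos_iff, Walk.length_darts, Walk.length_rotate]
    exact hw
  have hcolors := ((isPCClosed_iff_chain_darts w').1
    ((isPCClosed_rotate w hz).2 hpc)).rel_getLast_head hne
  set first := w'.darts.head hne
  set last := w'.darts.getLast hne
  have hfirst : first.fst = z := by simp [first]
  have hlast : last.snd = z := by simp [last]
  apply hcolors
  have hfirst_adj : G.Adj z first.snd := hfirst ▸ first.adj
  have hlast_adj : G.Adj z last.fst := hlast ▸ last.adj.symm
  rw [hfirst, hlast, hsym]
  exact hmono _ _ hlast_adj hfirst_adj

lemma exists_adj_col_ne_of_not_monoVertex {z : V} (h : ¬ MonoVertex G col z) (x : Fin c) :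
    ∃ y, G.Adj z y ∧ col z y ≠ x := by
  simp only [MonoVertex, not_forall] at h
  obtain ⟨a, b, ha, hb, hab⟩ := h
  by_cases hax : col z a = x
  · exact ⟨b, hb, fun hbx => hab (hax.trans hbx.symm)⟩
  · exact ⟨a, ha, hax⟩

lemma hasPCClosedWalk_of_forall_not_monoVertex [Finite V] [Nonempty V]
    (h : ∀ v, ¬ MonoVertex G col v) : HasPCClosedWalk G col := by
  choose next hadj hcol using fun d : G.Dart =>
    exists_adj_col_ne_of_not_monoVertex (h d.snd) (col d.fst d.snd)
  let f : G.Dart → G.Dart := fun d => ⟨(d.snd, next d), hadj d⟩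
  have : Finite G.Dart := Finite.of_injective _ Dart.toProd_injective
  have : Nonempty G.Dart := by
    obtain ⟨v⟩ := ‹Nonempty V›
    have hv := h v
    simp only [MonoVertex, not_forall] at hv
    obtain ⟨y, -, hy, -⟩ := hv
    exact ⟨⟨(v, y), hy⟩⟩
  obtain ⟨d, n, hn, hper⟩ := Function.exists_isPeriodicPt_of_finite f
  have hf : ∀ d, (f d).fst = d.snd := fun _ => rfl
  refine ⟨d.fst, (Walk.ofIterate f hf d n).copy rfl (congrArg (·.fst) hper.eq), ?_, ?_⟩
  · rwa [Walk.length_copy, ← Walk.length_darts, Walk.darts_ofIterate, List.length_iterate]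
  · rw [isPCClosed_iff_chain_darts, Walk.darts_copy, Walk.darts_ofIterate]
    exact Cycle.chain_iterate_of_isPeriodicPt (fun d => (hcol d).symm) hper

end PCWalks

/-- A `c`-edge-colored graph `G` with at least one vertex has no PC closed
walk iff `G` has a `G`-monochromatic vertex `z` such that `G - z` has no PC closed walk. -/
theorem no_pc_closed_walk_iff_exists_peel {V : Type*} [Fintype V] [Nonempty V] {c : ℕ}
    (G : SimpleGraph V) (col : V → V → Fin c) (hsym : ∀ u v, col u v = col v u) :
    ¬ HasPCClosedWalk G col ↔
      ∃ z : V, MonoVertex G col z ∧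
        ¬ HasPCClosedWalk (G.induce {x | x ≠ z}) (fun a b => col a.1 b.1) := by
  constructor
  · intro h
    obtain ⟨z, hz⟩ : ∃ z, MonoVertex G col z := by
      by_contra! hno
      exact h (hasPCClosedWalk_of_forall_not_monoVertex hno)
    exact ⟨z, hz, fun hGz => h (hGz.of_hom (Embedding.induce _).toHom)⟩
  · rintro ⟨z, hz, hGz⟩ ⟨u, w, hw, hpc⟩
    by_cases hzw : z ∈ w.support
    · exact hpc.not_monoVertex hsym hw hzw hz
    · exact hGz (hpc.hasPCClosedWalk_induce hw fun x hx hxz => hzw (hxz ▸ hx))
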